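/- Let n be a positive integer and let D = ([n], A) be a digraph on vertex set {1,…,n} that is compatibly labeled, i.e., s(a) < t(a) for every arc a ∈ A (in particular D is acyclic). Then, as polynomials in q and y: B_D(q, y, 1) = (1/n!) · Σ_{σ ∈ S_n} ( ∏_{i=1}^{n} (q − asc(σ^{−1}) + i − 1) ) · y^{A^<(σ)}, where the sum is over all permutations σ of {1,…,n}, asc(σ^{−1}) = |{ i ∈ {1,…,n−1} : σ^{−1}(i) < σ^{−1}(i+1) }|, and A^<(σ) = |{ a ∈ A : σ(s(a)) < σ(t(a)) }|. -/

import Mathlib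

open Finset

/-- The sum over all `q`-colorings of a digraph of
`y ^ (number of ascents) * z ^ (number of descents)`. -/
def colorSum (V A : Type) [Fintype V] [DecidableEq V] [Fintype A]
    (s t : A → V) (q : ℕ) (y z : ℚ) : ℚ :=
  ∑ f : V → Fin q,
    y ^ (Finset.univ.filter (fun a => f (s a) < f (t a))).card *
    z ^ (Finset.univ.filter (fun a => f (t a) < f (s a))).card

/-- The number of ascents of a permutation `σ` of `{0,…,n−1}` (standing for
`{1,…,n}`): the number of `i` with `i + 1 ≤ n − 1` and `σ i < σ (i+1)`. -/
def permAscents {n : ℕ} (σ : Equiv.Perm (Fin n)) : ℕ :=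
  (Finset.univ.filter (fun i : Fin n =>
    (i : ℕ) + 1 < n ∧ σ i < σ ⟨((i : ℕ) + 1) % n, Nat.mod_lt _ i.pos⟩)).card

/-!
A colouring `f` determines the permutation `σ = standardize f` ranking the vertices by colour,
ties broken by decreasing label. Since every arc goes from a smaller to a larger label, an arc is an
ascent of `f` exactly when it is an ascent of `σ`. The colourings with a given `σ` are the `c ∘ σ`
with `c` weakly increasing and strictly increasing at the ascents of `σ⁻¹`; adding to `c i` the
number of weak steps below `i` makes it strictly increasing into a range of size
`q + n - 1 - asc(σ⁻¹)`, so there are `C(q + n - 1 - asc(σ⁻¹), n)` of them, and `n!` times this is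
the product in the statement. Both sides are polynomials in `q` that agree at every positive
integer `q`.
-/

namespace Fin

lemma val_le_orderEmbedding_apply {k N : ℕ} (e : Fin k ↪o Fin N) (i : Fin k) : (i : ℕ) ≤ e i := by
  simpa using card_le_card_of_injOn e (s := Iio i) (t := Iio (e i))
    (fun j hj => by simpa using hj) e.injective.injOn

lemma orderEmbedding_apply_add_le {k N : ℕ} (e : Fin k ↪o Fin N) (i : Fin k) :
    (e i : ℕ) + (k - i) ≤ N := by
  have := card_le_card_of_injOn e (s := Ioi i) (t := Ioi (e i))
    (fun j hj => by simpa using hj) e.injective.injOn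
  simp only [card_Ioi] at this
  omega

end Fin

section MonotoneStrictAt

variable {m : ℕ} (T : Finset (Fin m))

def MonotoneStrictAt {α : Type*} [Preorder α] (c : Fin (m + 1) → α) : Prop :=
  Monotone c ∧ ∀ i ∈ T, c i.castSucc < c i.succ

def gapCount (k : ℕ) : ℕ := #{j ∈ Tᶜ | j.val < k}

lemma gapCount_add_card_filter_lt (k : ℕ) :
    gapCount T k + #{j ∈ T | j.val < k} = min m k := by
  rw [← Fin.card_filter_val_lt,
    ← card_filter_add_card_filter_not (s := {i : Fin m | i.val < k}) (p := (· ∈ T)),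
    add_comm, gapCount, filter_filter, filter_filter]
  congr 2 <;> ext <;> simp [and_comm]

lemma gapCount_le_card_compl (k : ℕ) : gapCount T k ≤ m - #T := by
  calc gapCount T k ≤ #Tᶜ := card_filter_le _ _
    _ = m - #T := by simp [card_compl]

lemma gapCount_succ (i : Fin m) :
    gapCount T (i + 1) = gapCount T i + if i ∈ T then 0 else 1 := by
  unfold gapCount
  split_ifs with hi
  · congr 1; ext j; simp only [mem_filter, mem_compl]
    grind [Fin.ext_iff]
  · rw [← card_insert_of_notMem (a := i) (by simp)]
    congr 1; ext j; simp only [mem_filter, mem_compl, mem_insert]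
    grind [Fin.ext_iff]

variable {T} {q N : ℕ}

lemma MonotoneStrictAt.strictMono_add_gapCount {c : Fin (m + 1) → Fin q}
    (hc : MonotoneStrictAt T c) : StrictMono fun i => (c i : ℕ) + gapCount T i := by
  refine Fin.strictMono_iff_lt_succ.2 fun i => ?_
  have := Fin.le_def.1 (hc.1 i.castSucc_le_succ)
  have := fun hi => Fin.lt_def.1 (hc.2 i hi)
  simp only [Fin.val_castSucc, Fin.val_succ, gapCount_succ]
  split_ifs <;> grind

lemma monotoneStrictAt_sub_gapCount (e : Fin (m + 1) ↪o Fin N) :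
    MonotoneStrictAt T fun i => (e i : ℕ) - gapCount T i := by
  have step (i : Fin m) : (e i.castSucc : ℕ) - gapCount T i + (if i ∈ T then 1 else 0) ≤
      e i.succ - gapCount T (i + 1) := by
    have := Fin.lt_def.1 (e.strictMono i.castSucc_lt_succ)
    have := Fin.val_le_orderEmbedding_apply e i.castSucc
    have := gapCount_add_card_filter_lt T i
    rw [gapCount_succ]
    simp only [Fin.val_castSucc] at *
    split_ifs <;> omega
  refine ⟨Fin.monotone_iff_le_succ.2 fun i => ?_, fun i hi => ?_⟩
  · simpa using (Nat.le_add_right _ _).trans (step i)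
  · simpa [hi] using step i

variable (T)

def monotoneStrictAtEquiv :
    {c : Fin (m + 1) → Fin q // MonotoneStrictAt T c} ≃ (Fin (m + 1) ↪o Fin (q + m - #T)) where
  toFun c := OrderEmbedding.ofStrictMono
    (fun i => ⟨c.1 i + gapCount T i, by
      have := gapCount_le_card_compl T i
      have := card_finset_fin_le T
      omega⟩)
    fun _ _ h => Fin.mk_lt_mk.2 (c.2.strictMono_add_gapCount h)
  invFun e := ⟨fun i => ⟨e i - gapCount T i, by
      have := Fin.orderEmbedding_apply_add_le e i
      have := Fin.val_le_orderEmbedding_apply e i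
      have := gapCount_add_card_filter_lt T i
      have := card_filter_le T (fun j => j.val < i)
      have := card_finset_fin_le T
      omega⟩,
    ⟨fun _ _ h => Fin.mk_le_mk.2 ((monotoneStrictAt_sub_gapCount e).1 h),
      fun i hi => Fin.mk_lt_mk.2 ((monotoneStrictAt_sub_gapCount e).2 i hi)⟩⟩
  left_inv c := by ext i; exact Nat.add_sub_cancel _ _
  right_inv e := by
    ext i
    refine Nat.sub_add_cancel (le_trans ?_ (Fin.val_le_orderEmbedding_apply e i))
    have := gapCount_add_card_filter_lt T i
    omega

lemma Nat.card_monotoneStrictAt :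
    Nat.card {c : Fin (m + 1) → Fin q // MonotoneStrictAt T c} = (q + m - #T).choose (m + 1) := by
  rw [Nat.card_congr ((monotoneStrictAtEquiv T).trans Set.powersetCard.ofFinEmbEquiv),
    Set.powersetCard.card, Nat.card_eq_fintype_card, Fintype.card_fin]

end MonotoneStrictAt

lemma Fin.strictMono_toLex_iff {m : ℕ} {α β : Type*} [PartialOrder α] [LinearOrder β]
    (c : Fin (m + 1) → α) (d : Fin (m + 1) → β) :
    StrictMono (fun i => toLex (c i, d i)) ↔
      Monotone c ∧ ∀ i : Fin m, d i.succ ≤ d i.castSucc → c i.castSucc < c i.succ := by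
  simp only [Fin.strictMono_iff_lt_succ, Fin.monotone_iff_le_succ, Prod.Lex.toLex_lt_toLex]
  refine ⟨fun h => ⟨fun i => ?_, fun i hd => ?_⟩, fun ⟨hc, hd⟩ i => ?_⟩
  · rcases h i with h | h
    exacts [h.le, h.1.le]
  · exact (h i).resolve_right fun h' => h'.2.not_ge hd
  · rcases (hc i).lt_or_eq with h | h
    exacts [.inl h, .inr ⟨h, lt_of_not_ge fun h' => (hd i h').ne h⟩]

section Standardization

variable {n q : ℕ}

def colorKey (f : Fin n → Fin q) (v : Fin n) : Fin q ×ₗ (Fin n)ᵒᵈ :=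
  toLex (f v, OrderDual.toDual v)

lemma colorKey_injective (f : Fin n → Fin q) : Function.Injective (colorKey f) :=
  fun _ _ h => by simpa [colorKey] using congrArg (fun x => (ofLex x).2) h

def standardize (f : Fin n → Fin q) : Equiv.Perm (Fin n) := (Tuple.sort (colorKey f))⁻¹

lemma standardize_eq_iff (f : Fin n → Fin q) (σ : Equiv.Perm (Fin n)) :
    standardize f = σ ↔ StrictMono (colorKey f ∘ ⇑σ⁻¹) := by
  rw [standardize, inv_eq_iff_eq_inv, eq_comm, Tuple.eq_sort_iff]
  refine ⟨fun h => h.1.strictMono_of_injective ((colorKey_injective f).comp σ⁻¹.injective),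
    fun h => ⟨h.monotone, fun i j hij heq => ?_⟩⟩
  exact absurd (σ⁻¹.injective (colorKey_injective f heq)) hij.ne

lemma standardize_lt_standardize_iff (f : Fin n → Fin q) {u v : Fin n} :
    standardize f u < standardize f v ↔ colorKey f u < colorKey f v := by
  simpa using (((standardize_eq_iff f _).1 rfl).lt_iff_lt (a := standardize f u)
    (b := standardize f v)).symm

lemma lt_iff_standardize_lt (f : Fin n → Fin q) {u v : Fin n} (huv : u < v) :
    f u < f v ↔ standardize f u < standardize f v := by
  rw [standardize_lt_standardize_iff, colorKey, colorKey, Prod.Lex.toLex_lt_toLex]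
  simp [huv.not_gt]

end Standardization

section Fibers

variable {m q : ℕ}

def ascentSet (τ : Equiv.Perm (Fin (m + 1))) : Finset (Fin m) := {i | τ i.castSucc < τ i.succ}

lemma permAscents_eq_card_ascentSet (τ : Equiv.Perm (Fin (m + 1))) :
    permAscents τ = #(ascentSet τ) := by
  rw [permAscents, ascentSet, eq_comm, ← card_map Fin.castSuccEmb]
  refine congrArg card (ext fun i => ?_)
  induction i using Fin.lastCases with
  | last => simp
  | cast j =>
    have : (⟨(j + 1) % (m + 1), Nat.mod_lt _ j.castSucc.pos⟩ : Fin (m + 1)) = j.succ := by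
      ext; simp [Nat.mod_eq_of_lt (Nat.succ_lt_succ j.is_lt)]
    simp [this]

lemma permAscents_le (τ : Equiv.Perm (Fin (m + 1))) : permAscents τ ≤ m :=
  (permAscents_eq_card_ascentSet τ).trans_le (card_finset_fin_le _)

lemma standardize_eq_iff_monotoneStrictAt (f : Fin (m + 1) → Fin q)
    (σ : Equiv.Perm (Fin (m + 1))) :
    standardize f = σ ↔ MonotoneStrictAt (ascentSet σ⁻¹) (f ∘ ⇑σ⁻¹) := by
  rw [standardize_eq_iff]
  refine (Fin.strictMono_toLex_iff (f ∘ ⇑σ⁻¹) (OrderDual.toDual ∘ ⇑σ⁻¹)).trans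
    (and_congr_right' (forall_congr' fun i => ?_))
  simp only [Function.comp_apply, OrderDual.toDual_le_toDual, ascentSet, mem_filter, mem_univ,
    true_and, (σ⁻¹.injective.ne i.castSucc_lt_succ.ne).le_iff_lt]

lemma card_filter_standardize_eq (σ : Equiv.Perm (Fin (m + 1))) :
    #{f : Fin (m + 1) → Fin q | standardize f = σ} = (q + m - permAscents σ⁻¹).choose (m + 1) := by
  rw [← Fintype.card_subtype, ← Nat.card_eq_fintype_card, permAscents_eq_card_ascentSet,
    ← Nat.card_monotoneStrictAt]
  exact Nat.card_congr <| (Equiv.arrowCongr σ (Equiv.refl _)).subtypeEquiv fun f =>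
    standardize_eq_iff_monotoneStrictAt f σ

end Fibers

lemma colorSum_eq_sum_perm {m q : ℕ} (A : Type) [Fintype A] (s t : A → Fin (m + 1))
    (hcomp : ∀ a, s a < t a) (y : ℚ) :
    colorSum (Fin (m + 1)) A s t q y 1 =
      ∑ σ : Equiv.Perm (Fin (m + 1)),
        ((q + m - permAscents σ⁻¹).choose (m + 1) : ℚ) * y ^ #{a | σ (s a) < σ (t a)} := by
  simp only [colorSum, one_pow, mul_one]
  rw [← sum_fiberwise univ standardize]
  refine sum_congr rfl fun σ _ => ?_
  rw [← card_filter_standardize_eq, ← nsmul_eq_mul, ← sum_const]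
  refine sum_congr rfl fun f hf => ?_
  rw [← (mem_filter.1 hf).2]
  simp only [lt_iff_standardize_lt f (hcomp _)]

lemma factorial_mul_choose_eq_prod_Icc (q a m : ℕ) (ha : a ≤ m) :
    ((m + 1).factorial : ℚ) * (q + m - a).choose (m + 1) =
      ∏ i ∈ Icc 1 (m + 1), ((q : ℚ) - a + i - 1) := by
  rw [← Nat.cast_mul, ← Nat.descFactorial_eq_factorial_mul_choose,
    ← descPochhammer_eval_eq_descFactorial, descPochhammer_eval_eq_prod_range,
    ← prod_range_reflect, ← Ico_add_one_right_eq_Icc, prod_Ico_eq_prod_range]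
  refine prod_congr rfl fun j hj => ?_
  have := mem_range.1 hj
  push_cast [Nat.cast_sub (show a ≤ q + m by omega), Nat.cast_sub (show j ≤ m by omega)]
  ring

lemma Polynomial.eq_of_eval_natCast_eq {R : Type*} [CommRing R] [IsDomain R] [CharZero R]
    {p p' : Polynomial R} (h : ∀ k : ℕ, 0 < k → p.eval (k : R) = p'.eval (k : R)) : p = p' := by
  refine eq_of_infinite_eval_eq p p' <| (Set.infinite_range_of_injective
    (f := fun k : ℕ => ((k + 1 : ℕ) : R)) ?_).mono (Set.range_subset_iff.2 fun k => h _ k.succ_pos)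
  exact fun a b hab => Nat.succ_injective (Nat.cast_injective hab)

/-- for a compatibly labeled digraph `D` on vertex set `{1,…,n}`
(modeled as `Fin n`, with `s a < t a` for every arc `a`), as polynomials in `q` and
`y` (stated for all rationals `q, y`):
`B_D(q, y, 1) = (1/n!) Σ_{σ ∈ S_n} (∏_{i=1}^{n} (q − asc(σ⁻¹) + i − 1)) · y^{A^<(σ)}`,
where `asc(σ⁻¹)` is the number of ascents of `σ⁻¹` and
`A^<(σ) = #{a ∈ A : σ(s a) < σ(t a)}`. -/
theorem B_compatibly_labeled_fundamental_expansion
    (n : ℕ) (hn : 0 < n) (A : Type) [Fintype A]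
    (s t : A → Fin n) (hcomp : ∀ a : A, s a < t a)
    (B : MvPolynomial (Fin 3) ℚ)
    (hB : ∀ q : ℕ, 0 < q → ∀ y z : ℚ,
      MvPolynomial.eval ![(q : ℚ), y, z] B = colorSum (Fin n) A s t q y z) :
    ∀ q y : ℚ,
      MvPolynomial.eval ![q, y, 1] B =
        (1 / (n.factorial : ℚ)) *
        ∑ σ : Equiv.Perm (Fin n),
          (∏ i ∈ Finset.Icc 1 n, (q - (permAscents σ⁻¹ : ℚ) + (i : ℚ) - 1)) *
          y ^ (Finset.univ.filter (fun a : A => σ (s a) < σ (t a))).card := by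
  obtain ⟨m, rfl⟩ : ∃ m, n = m + 1 := ⟨n - 1, by omega⟩
  intro q y
  open Polynomial in
  let P : ℚ[X] := MvPolynomial.aeval ![X, C y, 1] B
  let Q : ℚ[X] := C (1 / ((m + 1).factorial : ℚ)) * ∑ σ : Equiv.Perm (Fin (m + 1)),
    (∏ i ∈ Icc 1 (m + 1), (X - C (permAscents σ⁻¹ : ℚ) + C (i : ℚ) - 1)) *
      C (y ^ #{a | σ (s a) < σ (t a)})
  have hP (x : ℚ) : P.eval x = MvPolynomial.eval ![x, y, 1] B := by
    rw [← Polynomial.coe_aeval_eq_eval, MvPolynomial.comp_aeval_apply, MvPolynomial.aeval_eq_eval]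
    congr 2
    funext i
    fin_cases i <;> simp
  have hQ (x : ℚ) : Q.eval x = 1 / ((m + 1).factorial : ℚ) * ∑ σ : Equiv.Perm (Fin (m + 1)),
      (∏ i ∈ Icc 1 (m + 1), (x - (permAscents σ⁻¹ : ℚ) + (i : ℚ) - 1)) *
        y ^ #{a | σ (s a) < σ (t a)} := by
    simp [Q, Polynomial.eval_finsetSum, Polynomial.eval_prod]
  have hPQ : P = Q := Polynomial.eq_of_eval_natCast_eq fun k hk => by
    rw [hP, hQ, hB k hk, colorSum_eq_sum_perm A s t hcomp, mul_sum]
    refine sum_congr rfl fun σ _ => ?_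
    rw [← factorial_mul_choose_eq_prod_Icc k _ m (permAscents_le σ⁻¹)]
    field_simp
  rw [← hP, hPQ, hQ]
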